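/- arXiv:1405.5423 — 5 statements merged into one kernel-verified Lean document; each statement's English description precedes it below -/
import Mathlib

section
/- Let N ≥ 2 be an integer and let c, d ∈ ℤ. If (1/2)B₂(⟨c/N⟩) = (1/2)B₂(0) and (1/2)B₂(⟨d/N⟩) = (1/2)B₂(1/N), where B₂(X) = X² - X + 1/6 and ⟨x⟩ is the fractional part of x, then c ≡ 0 (mod N) and d ≡ ±1 (mod N). -/
/-- The second Bernoulli polynomial. -/
noncomputable def B₂ (x : ℝ) : ℝ := x ^ 2 - x + 1 / 6

/-! `B₂` is symmetric about `1/2`, so `B₂ x = B₂ y` forces `x = y` or `x + y = 1`. As fractional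
parts lie in `[0, 1)`, this gives `⟨c/N⟩ = 0` and `⟨d/N⟩ ∈ {⟨1/N⟩, 1 - 1/N = ⟨-1/N⟩}`; finally
`⟨a/N⟩ = ⟨b/N⟩` exactly when `a ≡ b [ZMOD N]`. -/

theorem B₂_eq_B₂_iff {x y : ℝ} : B₂ x = B₂ y ↔ x = y ∨ x + y = 1 := by
  have hfactor : B₂ x - B₂ y = (x - y) * (x + y - 1) := by unfold B₂; ring
  rw [← sub_eq_zero, hfactor, mul_eq_zero, sub_eq_zero, sub_eq_zero]

theorem Int.fract_intCast_div_eq_iff_modEq {a b : ℤ} {N : ℕ} (hN : N ≠ 0) :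
    Int.fract ((a : ℝ) / N) = Int.fract ((b : ℝ) / N) ↔ a ≡ b [ZMOD N] := by
  rw [Int.fract_div_intCast_eq_div_intCast_mod, Int.fract_div_intCast_eq_div_intCast_mod,
    div_left_inj' (Nat.cast_ne_zero.2 hN), Int.cast_inj]
  rfl

theorem Int.fract_one_div_natCast {N : ℕ} (hN : 2 ≤ N) : Int.fract (1 / (N : ℝ)) = 1 / N := by
  have hN' : (2 : ℝ) ≤ N := by exact_mod_cast hN
  rw [Int.fract_eq_self]
  constructor
  · positivity
  · rw [div_lt_one (by linarith)]
    linarith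

theorem fract_bernoulli_eq (N : ℕ) (hN : 2 ≤ N) (c d : ℤ)
    (hc : (1 / 2 : ℝ) * B₂ (Int.fract ((c : ℝ) / N)) = (1 / 2) * B₂ 0)
    (hd : (1 / 2 : ℝ) * B₂ (Int.fract ((d : ℝ) / N)) = (1 / 2) * B₂ (1 / N)) :
    c ≡ 0 [ZMOD N] ∧ (d ≡ 1 [ZMOD N] ∨ d ≡ -1 [ZMOD N]) := by
  have hN0 : N ≠ 0 := by omega
  have hfract_one : Int.fract (((1 : ℤ) : ℝ) / N) = 1 / N := by
    rw [Int.cast_one, Int.fract_one_div_natCast hN]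
  have hfract_neg_one : Int.fract (((-1 : ℤ) : ℝ) / N) = 1 - 1 / N := by
    have hne : Int.fract (1 / (N : ℝ)) ≠ 0 := by
      rw [Int.fract_one_div_natCast hN]
      positivity
    rw [Int.cast_neg, Int.cast_one, neg_div, Int.fract_neg hne, Int.fract_one_div_natCast hN]
  rw [mul_right_inj' (by norm_num), B₂_eq_B₂_iff] at hc hd
  constructor
  · rcases hc with hc | hc
    · rw [← Int.fract_intCast_div_eq_iff_modEq hN0]
      simpa using hc
    · exfalso
      linarith [Int.fract_lt_one ((c : ℝ) / N)]
  · rcases hd with hd | hd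
    · left
      rwa [← Int.fract_intCast_div_eq_iff_modEq hN0, hfract_one]
    · right
      rw [← Int.fract_intCast_div_eq_iff_modEq hN0, hfract_neg_one]
      linarith
end

section
/- Let N ≥ 4 be a real number. Then (2 sin(π/N) · e^{-π N^{-1/3}(1 - 1/N)}) / (1 - e^{-2π N^{-1/3}}) < 0.4. -/
set_option maxHeartbeats 1000000

open Real

lemma exp_neg_le (c : ℝ) (hc : 0 ≤ c) :
    Real.exp (-c) ≤ 1 / (1 + c + c ^ 2 / 2 + c ^ 3 / 6 + c ^ 4 / 24) := by
  have hS : (0:ℝ) < 1 + c + c ^ 2 / 2 + c ^ 3 / 6 + c ^ 4 / 24 := by positivity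
  have hsum : 1 + c + c ^ 2 / 2 + c ^ 3 / 6 + c ^ 4 / 24 ≤ Real.exp c := by
    have h := Real.sum_le_exp_of_nonneg hc 5
    simp [Finset.sum_range_succ, Nat.factorial] at h
    nlinarith [h]
  rw [Real.exp_neg, inv_eq_one_div]
  exact one_div_le_one_div_of_le hS hsum

lemma exp_pi_upper (a c : ℝ) (ha : 0 ≤ a) (hc : 0 ≤ c) (hca : c ≤ 3.1415 * a / 4) :
    Real.exp (-(π * a / 4)) ≤ 1 / (1 + c + c ^ 2 / 2 + c ^ 3 / 6 + c ^ 4 / 24) := by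
  refine le_trans (Real.exp_le_exp.mpr ?_) (exp_neg_le c hc)
  have := Real.pi_gt_d6
  nlinarith

lemma step_bound (a b u x : ℝ) (ha : 0 < a) (hax : a ≤ x) (hxb : x ≤ b)
    (hu : Real.exp (-(π * a / 4)) ≤ u) (hu0 : 0 < u)
    (hrat : 2 * 3.1416 * b ^ 3 * u ^ 3 < 0.4 * (1 - u ^ 8)) :
    2 * π * x ^ 3 * Real.exp (-(3 * π * x / 4)) < 0.4 * (1 - Real.exp (-(2 * π * x))) := by
  have hpi := Real.pi_gt_d6
  have hpi' := Real.pi_lt_d6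
  have hx0 : 0 < x := lt_of_lt_of_le ha hax
  have hb0 : 0 < b := lt_of_lt_of_le hx0 hxb
  have hE0 : (0:ℝ) < Real.exp (-(π * a / 4)) := Real.exp_pos _
  have h3 : Real.exp (-(3 * π * x / 4)) ≤ u ^ 3 := by
    have e1 : Real.exp (-(3 * π * x / 4)) ≤ Real.exp (-(3 * π * a / 4)) := by
      apply Real.exp_le_exp.mpr; nlinarith
    have e2 : Real.exp (-(3 * π * a / 4)) = Real.exp (-(π * a / 4)) ^ (3:ℕ) := by
      rw [← Real.exp_nat_mul]; congr 1; push_cast; ring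
    have e3 : Real.exp (-(π * a / 4)) ^ (3:ℕ) ≤ u ^ 3 := pow_le_pow_left₀ hE0.le hu 3
    calc Real.exp (-(3 * π * x / 4)) ≤ Real.exp (-(3 * π * a / 4)) := e1
      _ = Real.exp (-(π * a / 4)) ^ (3:ℕ) := e2
      _ ≤ u ^ 3 := e3
  have h8 : Real.exp (-(2 * π * x)) ≤ u ^ 8 := by
    have e1 : Real.exp (-(2 * π * x)) ≤ Real.exp (-(2 * π * a)) := by
      apply Real.exp_le_exp.mpr; nlinarith
    have e2 : Real.exp (-(2 * π * a)) = Real.exp (-(π * a / 4)) ^ (8:ℕ) := by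
      rw [← Real.exp_nat_mul]; congr 1; push_cast; ring
    have e3 : Real.exp (-(π * a / 4)) ^ (8:ℕ) ≤ u ^ 8 := pow_le_pow_left₀ hE0.le hu 8
    calc Real.exp (-(2 * π * x)) ≤ Real.exp (-(2 * π * a)) := e1
      _ = Real.exp (-(π * a / 4)) ^ (8:ℕ) := e2
      _ ≤ u ^ 8 := e3
  have hx3 : x ^ 3 ≤ b ^ 3 := pow_le_pow_left₀ hx0.le hxb 3
  have hL : 2 * π * x ^ 3 * Real.exp (-(3 * π * x / 4)) ≤ 2 * 3.1416 * b ^ 3 * u ^ 3 := by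
    have hexp0 : (0:ℝ) < Real.exp (-(3 * π * x / 4)) := Real.exp_pos _
    have c1 : 2 * π * x ^ 3 ≤ 2 * 3.1416 * b ^ 3 := by
      nlinarith [mul_le_mul_of_nonneg_left hx3 Real.pi_pos.le, pow_pos hb0 3]
    exact mul_le_mul c1 h3 hexp0.le (by positivity)
  have hR : 0.4 * (1 - u ^ 8) ≤ 0.4 * (1 - Real.exp (-(2 * π * x))) := by linarith [h8]
  linarith

lemma tail_bound (x : ℝ) (hx0 : 0 < x) (hxb : x ≤ 0.36) :
    2 * π * x ^ 3 * Real.exp (-(3 * π * x / 4)) < 0.4 * (1 - Real.exp (-(2 * π * x))) := by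
  have hpi := Real.pi_gt_d6
  have hpi' := Real.pi_lt_d6
  have h1 : Real.exp (-(3 * π * x / 4)) ≤ 1 := by
    apply Real.exp_le_one_iff.mpr; nlinarith
  set y : ℝ := 2 * π * x with hy
  have hy0 : 0 < y := by positivity
  have hq : 1 + y + y ^ 2 / 2 ≤ Real.exp y := Real.quadratic_le_exp_of_nonneg hy0.le
  have hS : (0:ℝ) < 1 + y + y ^ 2 / 2 := by positivity
  have h2 : Real.exp (-y) ≤ 1 / (1 + y + y ^ 2 / 2) := by
    rw [Real.exp_neg, inv_eq_one_div]
    exact one_div_le_one_div_of_le hS hq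
  have hpoly : 2 * π * x ^ 3 * (1 + y + y ^ 2 / 2) < 0.4 * (y + y ^ 2 / 2) := by
    have hx2 : x ^ 2 * (1 + 2 * π * x + 2 * π ^ 2 * x ^ 2) < 0.4 * (1 + π * x) := by
      have hb1 : x ^ 2 ≤ 0.36 * x := by nlinarith
      have hb2 : x ^ 3 ≤ 0.36 ^ 2 * x := by nlinarith
      have hb3 : x ^ 4 ≤ 0.36 ^ 3 * x := by nlinarith
      have hpi2 : π ^ 2 ≤ 3.141593 ^ 2 := by nlinarith
      have hpx1 : π * x ^ 3 ≤ 3.141593 * (0.36 ^ 2 * x) := by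
        nlinarith [Real.pi_pos, mul_pos hx0 hx0]
      have hpx2 : π ^ 2 * x ^ 4 ≤ 3.141593 ^ 2 * (0.36 ^ 3 * x) := by
        nlinarith [sq_nonneg π, pow_nonneg hx0.le 4]
      have hpx0 : 3.141592 * x ≤ π * x := by nlinarith
      nlinarith [hb1, hpx1, hpx2, hpx0]
    calc 2 * π * x ^ 3 * (1 + y + y ^ 2 / 2)
        = (2 * π * x) * (x ^ 2 * (1 + 2 * π * x + 2 * π ^ 2 * x ^ 2)) := by
          rw [hy]; ring
      _ < (2 * π * x) * (0.4 * (1 + π * x)) :=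
          mul_lt_mul_of_pos_left hx2 (by positivity)
      _ = 0.4 * (y + y ^ 2 / 2) := by rw [hy]; ring
  have hkey : 2 * π * x ^ 3 < 0.4 * (1 - 1 / (1 + y + y ^ 2 / 2)) := by
    have h' : 2 * π * x ^ 3 < 0.4 * (y + y ^ 2 / 2) / (1 + y + y ^ 2 / 2) := by
      rw [lt_div_iff₀ hS]; linarith
    have heq : 0.4 * (y + y ^ 2 / 2) / (1 + y + y ^ 2 / 2)
        = 0.4 * (1 - 1 / (1 + y + y ^ 2 / 2)) := by
      have hinv : 1 / (1 + y + y ^ 2 / 2) * (1 + y + y ^ 2 / 2) = 1 :=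
        one_div_mul_cancel hS.ne'
      rw [div_eq_iff hS.ne']
      linear_combination (0.4:ℝ) * hinv
    linarith
  have hLx : 2 * π * x ^ 3 * Real.exp (-(3 * π * x / 4)) ≤ 2 * π * x ^ 3 :=
    mul_le_of_le_one_right (by positivity) h1
  have hRx : 0.4 * (1 - 1 / (1 + y + y ^ 2 / 2)) ≤ 0.4 * (1 - Real.exp (-y)) := by
    linarith
  calc 2 * π * x ^ 3 * Real.exp (-(3 * π * x / 4)) ≤ 2 * π * x ^ 3 := hLx
    _ < 0.4 * (1 - 1 / (1 + y + y ^ 2 / 2)) := hkey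
    _ ≤ 0.4 * (1 - Real.exp (-y)) := hRx
    _ = 0.4 * (1 - Real.exp (-(2 * π * x))) := by rw [hy]

lemma key_bound (x : ℝ) (hx0 : 0 < x) (hxb : x ≤ 0.63) :
    2 * π * x ^ 3 * Real.exp (-(3 * π * x / 4)) < 0.4 * (1 - Real.exp (-(2 * π * x))) := by
  rcases le_or_gt x 0.36 with h | h
  · exact tail_bound x hx0 h
  rcases le_or_gt x 0.46 with h2 | h2
  · exact step_bound 0.36 0.46 _ x (by norm_num) h.le h2
      (exp_pi_upper 0.36 0.2827 (by norm_num) (by norm_num) (by norm_num))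
      (by norm_num) (by norm_num)
  rcases le_or_gt x 0.53 with h3 | h3
  · exact step_bound 0.46 0.53 _ x (by norm_num) h2.le h3
      (exp_pi_upper 0.46 0.3612 (by norm_num) (by norm_num) (by norm_num))
      (by norm_num) (by norm_num)
  rcases le_or_gt x 0.58 with h4 | h4
  · exact step_bound 0.53 0.58 _ x (by norm_num) h3.le h4
      (exp_pi_upper 0.53 0.4162 (by norm_num) (by norm_num) (by norm_num))
      (by norm_num) (by norm_num)
  rcases le_or_gt x 0.61 with h5 | h5
  · exact step_bound 0.58 0.61 _ x (by norm_num) h4.le h5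
      (exp_pi_upper 0.58 0.4555 (by norm_num) (by norm_num) (by norm_num))
      (by norm_num) (by norm_num)
  · exact step_bound 0.61 0.63 _ x (by norm_num) h5.le hxb
      (exp_pi_upper 0.61 0.479 (by norm_num) (by norm_num) (by norm_num))
      (by norm_num) (by norm_num)

theorem sin_exp_ratio_lt (N : ℝ) (hN : 4 ≤ N) :
    (2 * Real.sin (π / N) * Real.exp (-π * N ^ (-(1 : ℝ) / 3) * (1 - 1 / N))) /
      (1 - Real.exp (-2 * π * N ^ (-(1 : ℝ) / 3))) < 0.4 := by
  have hN0 : (0:ℝ) < N := by linarith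
  set x : ℝ := N ^ (-(1:ℝ)/3) with hxdef
  have hx0 : 0 < x := Real.rpow_pos_of_pos hN0 _
  have hx3 : x ^ 3 = N⁻¹ := by
    rw [hxdef, ← Real.rpow_natCast (N ^ (-(1:ℝ)/3)) 3, ← Real.rpow_mul hN0.le]
    rw [show (-(1:ℝ)/3 * (3:ℕ)) = (-1:ℝ) by push_cast; ring, Real.rpow_neg_one]
  have h14 : N⁻¹ ≤ 1/4 := by
    rw [inv_le_comm₀ (by linarith) (by norm_num)]
    linarith
  have hxc : x ^ 3 ≤ 1/4 := by rw [hx3]; exact h14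
  have hxb : x ≤ 0.63 := by
    apply le_of_pow_le_pow_left₀ (n := 3) (by norm_num) (by norm_num)
    calc x ^ 3 ≤ 1/4 := hxc
      _ ≤ 0.63 ^ 3 := by norm_num
  have hD : 0 < 1 - Real.exp (-2 * π * x) := by
    have : Real.exp (-2 * π * x) < 1 := by
      apply Real.exp_lt_one_iff.mpr
      nlinarith [Real.pi_pos]
    linarith
  rw [div_lt_iff₀ hD]
  have hsin : Real.sin (π / N) < π / N := Real.sin_lt (by positivity)
  have hπN : π / N = π * x ^ 3 := by rw [hx3, div_eq_mul_inv]
  have hexp1 : Real.exp (-π * x * (1 - 1/N)) ≤ Real.exp (-(3 * π * x / 4)) := by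
    apply Real.exp_le_exp.mpr
    have h14' : 1/N ≤ 1/4 := by rw [one_div]; exact h14
    nlinarith [mul_pos Real.pi_pos hx0]
  have hmain := key_bound x hx0 hxb
  have hE0 : (0:ℝ) < Real.exp (-π * x * (1 - 1/N)) := Real.exp_pos _
  have step1 : 2 * Real.sin (π / N) * Real.exp (-π * x * (1 - 1/N))
      < 2 * (π * x ^ 3) * Real.exp (-π * x * (1 - 1/N)) := by
    apply mul_lt_mul_of_pos_right _ hE0
    rw [← hπN]; linarith
  have step2 : 2 * (π * x ^ 3) * Real.exp (-π * x * (1 - 1/N))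
      ≤ 2 * π * x ^ 3 * Real.exp (-(3 * π * x / 4)) := by
    rw [show 2 * (π * x ^ 3) = 2 * π * x ^ 3 by ring]
    exact mul_le_mul_of_nonneg_left hexp1 (by positivity)
  have hfin : 0.4 * (1 - Real.exp (-(2 * π * x))) = 0.4 * (1 - Real.exp (-2 * π * x)) := by
    ring_nf
  linarith [step1, step2, hmain, hfin.le, hfin.ge]
end

section
/- Let N ≥ 4 be an integer and 2 ≤ b ≤ N-2 an integer. Then for any 0 < A < 1, 2(1-cos(2πb/N))∏_{n≥1}(1-2cos(2πb/N)Aⁿ+A^{2n})² > 2(1-cos(2π/N))∏_{n≥1}(1-2cos(2π/N)Aⁿ+A^{2n})². -/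
open Real

lemma siegel_factor_pos {c A : ℝ} (hc1 : c ≤ 1) (hA0 : 0 < A) (hA1 : A < 1)
    (n : ℕ) : 0 < 1 - 2 * c * A ^ (n + 1) + A ^ (2 * (n + 1)) := by
  have hx0 : 0 < A ^ (n + 1) := pow_pos hA0 _
  have hx1 : A ^ (n + 1) < 1 := pow_lt_one₀ hA0.le hA1 (Nat.succ_ne_zero n)
  have h2 : A ^ (2 * (n + 1)) = (A ^ (n + 1)) ^ 2 := by
    rw [mul_comm, pow_mul]
  rw [h2]
  nlinarith [mul_pos (sub_pos.mpr hx1) (sub_pos.mpr hx1),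
    mul_le_mul_of_nonneg_right hc1 hx0.le]

lemma siegel_abs_log_le {m t : ℝ} (hm0 : 0 < m) (hm1 : m ≤ 1) (ht : m ≤ t) :
    |Real.log t| ≤ |t - 1| / m := by
  have ht0 : 0 < t := lt_of_lt_of_le hm0 ht
  rcases le_or_gt 1 t with h | h
  · rw [abs_of_nonneg (Real.log_nonneg h), abs_of_nonneg (by linarith), le_div_iff₀ hm0]
    nlinarith [Real.log_le_sub_one_of_pos ht0, Real.log_nonneg h]
  · rw [abs_of_nonpos (Real.log_nonpos ht0.le h.le), abs_of_nonpos (by linarith),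
      le_div_iff₀ hm0]
    have h1 : Real.log t⁻¹ ≤ t⁻¹ - 1 := Real.log_le_sub_one_of_pos (inv_pos.mpr ht0)
    rw [Real.log_inv] at h1
    have h2 : t⁻¹ * t = 1 := inv_mul_cancel₀ ht0.ne'
    nlinarith [mul_le_mul_of_nonneg_left ht (show (0:ℝ) ≤ t⁻¹ - 1 by nlinarith)]

lemma siegel_log_summable {c A : ℝ} (hc : -1 ≤ c) (hc1 : c ≤ 1) (hA0 : 0 < A) (hA1 : A < 1) :
    Summable (fun n : ℕ =>
      Real.log ((1 - 2 * c * A ^ (n + 1) + A ^ (2 * (n + 1))) ^ 2)) := by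
  have hA' : 0 < 1 - A := by linarith
  set m : ℝ := ((1 - A) ^ 2) ^ 2 with hm
  have hm0 : 0 < m := by positivity
  have hsq1 : (1 - A) ^ 2 ≤ 1 := by nlinarith
  have hm1 : m ≤ 1 := by nlinarith [sq_nonneg (1 - A)]
  apply Summable.of_abs
  have hs : Summable (fun n : ℕ => A ^ n) := summable_geometric_of_lt_one hA0.le hA1
  refine Summable.of_nonneg_of_le (fun n => abs_nonneg _) (fun n => ?_)
    ((hs.mul_left (15 / m * A)).congr
      (fun n => show 15 / m * A * A ^ n = 15 / m * A ^ (n + 1) by rw [pow_succ]; ring))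
  set x : ℝ := A ^ (n + 1) with hxd
  set g : ℝ := 1 - 2 * c * x + A ^ (2 * (n + 1)) with hg
  have hx0 : 0 < x := pow_pos hA0 _
  have hx1 : x < 1 := pow_lt_one₀ hA0.le hA1 (Nat.succ_ne_zero n)
  have hxA : x ≤ A := by
    calc x ≤ A ^ 1 := pow_le_pow_of_le_one hA0.le hA1.le (by omega)
    _ = A := pow_one A
  have h2 : A ^ (2 * (n + 1)) = x ^ 2 := by rw [hxd, mul_comm, pow_mul]
  have hgx : g = 1 - 2 * c * x + x ^ 2 := by rw [hg, h2]
  have hglb : (1 - x) ^ 2 ≤ g := by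
    rw [hgx]; nlinarith [mul_le_mul_of_nonneg_right hc1 hx0.le]
  have hgpos : 0 < g := siegel_factor_pos hc1 hA0 hA1 n
  have ha : (1 - A) ^ 2 ≤ g := le_trans (by nlinarith) hglb
  have hmg : m ≤ g ^ 2 := pow_le_pow_left₀ (sq_nonneg _) ha 2
  have key := siegel_abs_log_le hm0 hm1 hmg
  refine key.trans ?_
  have h5 : g + 1 ≤ 5 := by
    rw [hgx]; nlinarith [mul_le_mul_of_nonneg_right hc hx0.le]
  have h3 : |g - 1| ≤ 3 * x := by
    rw [hgx]
    refine abs_le.mpr ⟨?_, ?_⟩ <;>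
      nlinarith [mul_le_mul_of_nonneg_right hc hx0.le,
        mul_le_mul_of_nonneg_right hc1 hx0.le]
  have h15 : |g ^ 2 - 1| ≤ 15 * x := by
    have hfac : g ^ 2 - 1 = (g - 1) * (g + 1) := by ring
    rw [hfac, abs_mul, abs_of_pos (by linarith : (0:ℝ) < g + 1)]
    calc |g - 1| * (g + 1) ≤ (3 * x) * 5 :=
          mul_le_mul h3 h5 (by linarith) (by positivity)
      _ = 15 * x := by ring
  calc |g ^ 2 - 1| / m ≤ (15 * x) / m := by gcongr
    _ = 15 / m * x := by ring

lemma siegel_cos_lt {N b : ℕ} (hN : 4 ≤ N) (hb2 : 2 ≤ b) (hb : b ≤ N - 2) :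
    Real.cos (2 * π * b / N) < Real.cos (2 * π / N) := by
  have hNpos : (0:ℝ) < N := by positivity
  have hbR : (2:ℝ) ≤ b := by exact_mod_cast hb2
  have hbN : (b:ℝ) ≤ (N:ℝ) - 2 := by
    have h : b + 2 ≤ N := by omega
    have h' := (Nat.cast_le (α := ℝ)).mpr h
    push_cast at h'; linarith
  have hNR : (4:ℝ) ≤ N := by exact_mod_cast hN
  set t : ℝ := 2 * π / N with htd
  set x : ℝ := 2 * π * b / N with hxd
  have ht0 : 0 < t := by positivity
  have hx_eq : x = t * b := by rw [htd, hxd]; ring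
  have htN : t * N = 2 * π := by rw [htd]; field_simp
  have h2t : 2 * t ≤ x := by
    rw [hx_eq]; nlinarith
  have hx2 : x ≤ 2 * π - 2 * t := by
    rw [hx_eq]
    nlinarith [mul_le_mul_of_nonneg_left hbN ht0.le]
  have htpi : t ≤ π / 2 := by
    rw [htd, div_le_div_iff₀ hNpos (by norm_num : (0:ℝ) < 2)]
    nlinarith [pi_pos]
  rcases le_or_gt x π with hxpi | hxpi
  · exact cos_lt_cos_of_nonneg_of_le_pi ht0.le hxpi (by linarith)
  · rw [← Real.cos_two_pi_sub x]
    exact cos_lt_cos_of_nonneg_of_le_pi ht0.le (by linarith) (by linarith)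

theorem siegel_prod_gt (N : ℕ) (hN : 4 ≤ N) (b : ℕ) (hb2 : 2 ≤ b) (hb : b ≤ N - 2)
    (A : ℝ) (hA0 : 0 < A) (hA1 : A < 1) :
    2 * (1 - Real.cos (2 * π * b / N)) *
        ∏' n : ℕ, (1 - 2 * Real.cos (2 * π * b / N) * A ^ (n + 1) + A ^ (2 * (n + 1))) ^ 2 >
      2 * (1 - Real.cos (2 * π / N)) *
        ∏' n : ℕ, (1 - 2 * Real.cos (2 * π / N) * A ^ (n + 1) + A ^ (2 * (n + 1))) ^ 2 := by
  set c₁ : ℝ := Real.cos (2 * π * b / N) with hc₁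
  set c₂ : ℝ := Real.cos (2 * π / N) with hc₂
  have hlt : c₁ < c₂ := siegel_cos_lt hN hb2 hb
  have hc₁m : -1 ≤ c₁ := neg_one_le_cos _
  have hc₁1 : c₁ ≤ 1 := cos_le_one _
  have hc₂m : -1 ≤ c₂ := neg_one_le_cos _
  have hc₂1 : c₂ ≤ 1 := cos_le_one _
  have hc₂lt1 : c₂ < 1 := by
    have hNpos : (0:ℝ) < N := by positivity
    have hNR : (4:ℝ) ≤ N := by exact_mod_cast hN
    have h1 : 2 * π / N ≤ π := by
      rw [div_le_iff₀ hNpos]; nlinarith [pi_pos]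
    have h0 : 0 < 2 * π / N := by positivity
    have := cos_lt_cos_of_nonneg_of_le_pi (le_refl 0) h1 h0
    simpa using this
  -- products equal exponentials of sums of logs
  have hprod : ∀ c : ℝ, -1 ≤ c → c ≤ 1 →
      HasProd (fun n : ℕ => (1 - 2 * c * A ^ (n + 1) + A ^ (2 * (n + 1))) ^ 2)
        (Real.exp (∑' n : ℕ,
          Real.log ((1 - 2 * c * A ^ (n + 1) + A ^ (2 * (n + 1))) ^ 2))) := by
    intro c hcm hc1
    have hsum := siegel_log_summable hcm hc1 hA0 hA1
    have := hsum.hasSum.rexp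
    have heq : (Real.exp ∘ fun n : ℕ =>
        Real.log ((1 - 2 * c * A ^ (n + 1) + A ^ (2 * (n + 1))) ^ 2)) =
        fun n : ℕ => (1 - 2 * c * A ^ (n + 1) + A ^ (2 * (n + 1))) ^ 2 := by
      funext k
      exact Real.exp_log (pow_pos (siegel_factor_pos hc1 hA0 hA1 k) 2)
    rwa [heq] at this
  have h₁ := hprod c₁ hc₁m hc₁1
  have h₂ := hprod c₂ hc₂m hc₂1
  rw [h₁.tprod_eq, h₂.tprod_eq]
  have hterm : ∀ n : ℕ,
      Real.log ((1 - 2 * c₂ * A ^ (n + 1) + A ^ (2 * (n + 1))) ^ 2) ≤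
      Real.log ((1 - 2 * c₁ * A ^ (n + 1) + A ^ (2 * (n + 1))) ^ 2) := by
    intro n
    have hx0 : 0 < A ^ (n + 1) := pow_pos hA0 _
    have hg2 : 0 < 1 - 2 * c₂ * A ^ (n + 1) + A ^ (2 * (n + 1)) :=
      siegel_factor_pos hc₂1 hA0 hA1 n
    have hle : 1 - 2 * c₂ * A ^ (n + 1) + A ^ (2 * (n + 1)) ≤
        1 - 2 * c₁ * A ^ (n + 1) + A ^ (2 * (n + 1)) := by
      nlinarith [mul_le_mul_of_nonneg_right hlt.le hx0.le]
    have := pow_le_pow_left₀ hg2.le hle 2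
    exact Real.log_le_log (by positivity) this
  have hS := Summable.tsum_le_tsum hterm (siegel_log_summable hc₂m hc₂1 hA0 hA1)
    (siegel_log_summable hc₁m hc₁1 hA0 hA1)
  have hE := Real.exp_le_exp.mpr hS
  have hEpos := Real.exp_pos (∑' n : ℕ,
      Real.log ((1 - 2 * c₂ * A ^ (n + 1) + A ^ (2 * (n + 1))) ^ 2))
  nlinarith [hE, hEpos, hlt, hc₂lt1]
end

section
/- Let N ≥ 4 with N ≡ 0 (mod 2), and consider the family of exponents m assigning m = 8/gcd(4,N) to the vector v₁ = (1/2, 1/2 + 1/N), m = -8/gcd(4,N) to v₂ = (0, 1/N), and 0 elsewhere. Then this family satisfies: Σ m(v)(Nv₁)² ≡ Σ m(v)(Nv₂)² ≡ 0 (mod gcd(2,N)·N), Σ m(v)(Nv₁)(Nv₂) ≡ 0 (mod N), and gcd(12,N)·Σ m(v) ≡ 0 (mod 12). -/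
theorem kubert_lang_congruences (N : ℤ) (hN : 4 ≤ N) (hN2 : (2 : ℤ) ∣ N)
    (e : ℤ) (he : e = 8 / (Int.gcd 4 N : ℤ)) :
    (Int.gcd 2 N * N : ℤ) ∣ (e * (N / 2) ^ 2 + (-e) * 0 ^ 2) ∧
    (Int.gcd 2 N * N : ℤ) ∣ (e * (N / 2 + 1) ^ 2 + (-e) * 1 ^ 2) ∧
    N ∣ (e * (N / 2) * (N / 2 + 1) + (-e) * 0 * 1) ∧
    (12 : ℤ) ∣ (Int.gcd 12 N : ℤ) * (e + -e) := by
  obtain ⟨n, rfl⟩ := hN2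
  have hg2 : Int.gcd 2 (2 * n) = 2 := by
    have := Int.gcd_mul_left 2 1 n
    simpa using this
  have hdiv : (2 * n) / 2 = n := Int.mul_ediv_cancel_left n two_ne_zero
  rcases Int.even_or_odd n with ⟨m, rfl⟩ | ⟨m, rfl⟩
  · have hg4 : Int.gcd 4 (2 * (m + m)) = 4 := by
      have := Int.gcd_mul_left 4 1 m
      have h : (4 : ℤ) * m = 2 * (m + m) := by ring
      simpa [h] using this
    have he2 : e = 2 := by rw [he, hg4]; norm_num
    rw [hg2, hdiv, he2]
    refine ⟨⟨m, by push_cast; ring⟩, ⟨m + 1, by push_cast; ring⟩,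
      ⟨m + m + 1, by ring⟩, ⟨0, by ring⟩⟩
  · have hodd : Int.gcd 2 (2 * m + 1) = 1 := by
      have ho : Odd ((2 * m + 1 : ℤ).natAbs) := Int.natAbs_odd.mpr ⟨m, by ring⟩
      exact Nat.coprime_two_left.mpr ho
    have hg4 : Int.gcd 4 (2 * (2 * m + 1)) = 2 := by
      have := Int.gcd_mul_left 2 2 (2 * m + 1)
      have h : (2 : ℤ) * 2 = 4 := by norm_num
      rw [h] at this
      simp [this, hodd]
    have he4 : e = 4 := by rw [he, hg4]; norm_num
    rw [hg2, hdiv, he4]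
    exact ⟨⟨2 * m + 1, by push_cast; ring⟩, ⟨2 * m + 3, by push_cast; ring⟩,
      ⟨4 * m + 4, by ring⟩, ⟨0, by ring⟩⟩
end

section
/- The polynomial X⁸ - 72X⁷ + 12X⁶ + 72X⁵ + 38X⁴ + 72X³ + 12X² - 72X + 1 is irreducible over ℚ, and all of its roots are algebraic units (its constant term is 1 and it is monic with integer coefficients). -/
/-!
By Gauss's lemma it suffices to show that `P` has no monic factor `g` over `ℤ` of degree `d ≤ 4`.
Such a `g` has `g t ∣ P t` for every integer `t`; since `P 0 = 1`, `P (±1) = 64` and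
`P 2 = -4799` is prime, the values of `g` at `d` of the points `-1, 0, 1, 2` range over a short
list, and each choice determines `g`. None of the resulting candidates has `g 4 ∣ P 4 = -976991`
and `g (-4) ∣ P (-4) = 1226209`.

As the constant term of `P` is `1`, the reversed polynomial is again monic and kills `x⁻¹` for
every root `x`.
-/

open Polynomial

noncomputable def P : Polynomial ℤ :=
  X ^ 8 - C 72 * X ^ 7 + C 12 * X ^ 6 + C 72 * X ^ 5 + C 38 * X ^ 4 +
    C 72 * X ^ 3 + C 12 * X ^ 2 - C 72 * X + C 1

def signedPowers (p k : ℕ) : List ℤ :=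
  (List.range (k + 1)).flatMap fun i => [(p : ℤ) ^ i, -(p : ℤ) ^ i]

theorem mem_signedPowers_of_dvd {p k : ℕ} (hp : p.Prime) {v : ℤ} (h : v ∣ (p : ℤ) ^ k) :
    v ∈ signedPowers p k := by
  obtain ⟨i, hik, hi⟩ := (Nat.dvd_prime_pow hp).1 (Int.natAbs_dvd_natAbs.2 h |>.trans
    (by rw [Int.natAbs_pow, Int.natAbs_natCast]))
  simp only [signedPowers, List.mem_flatMap, List.mem_range, List.mem_cons, List.not_mem_nil,
    or_false]
  refine ⟨i, Nat.lt_succ_of_le hik, ?_⟩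
  rcases Int.natAbs_eq v with hv | hv <;> rw [hv, hi] <;> simp

theorem Polynomial.Monic.eval_eq_pow_add_sum {R : Type*} [CommSemiring R] {p : R[X]}
    (hp : p.Monic) (x : R) :
    p.eval x = x ^ p.natDegree + ∑ i ∈ Finset.range p.natDegree, p.coeff i * x ^ i := by
  conv_lhs => rw [hp.as_sum]
  simp [eval_finsetSum]

theorem Polynomial.isIntegral_inv_of_aeval_eq_zero {R K : Type*} [CommRing R] [Field K]
    [Algebra R K] {p : R[X]} (hp : p.coeff 0 = 1) {x : K} (hx : aeval x p = 0) :
    IsIntegral R x⁻¹ := by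
  have hx0 : x ≠ 0 := by
    rintro rfl
    simp [← coeff_zero_eq_aeval_zero', hp] at hx
  have := (algebraMap R K).domain_nontrivial
  let := invertibleOfNonzero hx0
  have hrev : p.reverse.Monic := by
    have : p.natTrailingDegree = 0 := natTrailingDegree_eq_zero.2 (Or.inr (by simp [hp]))
    rw [Monic, reverse_leadingCoeff, trailingCoeff, this, hp]
  refine ⟨p.reverse, hrev, ?_⟩
  rw [← invOf_eq_inv, eval₂_reverse_eq_zero_iff]
  exact hx

theorem P_natDegree : P.natDegree = 8 := by unfold P; compute_degree!

theorem P_monic : P.Monic := by unfold P; monicity!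

theorem P_coeff_zero : P.coeff 0 = 1 := by simp [P, coeff_one]

theorem eval_divisibility_of_dvd_P {g : ℤ[X]} (h : g ∣ P) :
    g.eval (-1) ∈ signedPowers 2 6 ∧ g.eval 0 ∈ signedPowers 2 0 ∧
      g.eval 1 ∈ signedPowers 2 6 ∧ g.eval 2 ∈ signedPowers 4799 1 ∧
      g.eval 4 ∣ 976991 ∧ g.eval (-4) ∣ 1226209 := by
  have hval (t : ℤ) (n : ℤ) (hn : P.eval t = n) : g.eval t ∣ n := hn ▸ eval_dvd h
  refine ⟨mem_signedPowers_of_dvd Nat.prime_two (hval _ _ (by norm_num [P])),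
    mem_signedPowers_of_dvd Nat.prime_two (hval _ _ (by norm_num [P])),
    mem_signedPowers_of_dvd Nat.prime_two (hval _ _ (by norm_num [P])),
    mem_signedPowers_of_dvd (by norm_num) (dvd_neg.1 (hval _ _ (by norm_num [P]))),
    dvd_neg.1 (hval _ _ (by norm_num [P])), hval _ _ (by norm_num [P])⟩

theorem not_dvd_P_of_natDegree_le_four {g : ℤ[X]} (hg : g.Monic) (hd₀ : 0 < g.natDegree)
    (hd : g.natDegree ≤ 4) : ¬ g ∣ P := by
  intro hdvd
  obtain ⟨hu, hv, hw, hz, h4, hm4⟩ := eval_divisibility_of_dvd_P hdvd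
  have ev := hg.eval_eq_pow_add_sum
  -- A monic `g` of degree `d` is determined by its values at `d` of the points `-1, 0, 1, 2`;
  -- Lagrange interpolation writes `g 4` and `g (-4)` as integral combinations of them.
  interval_cases g.natDegree <;> simp only [Finset.sum_range_succ, Finset.sum_range_zero] at ev
  · have check : ∀ v ∈ signedPowers 2 0, ¬ 4 + v ∣ 976991 := by decide
    rw [show g.eval 4 = 4 + g.eval 0 by simp only [ev]; ring] at h4
    exact check _ hv h4
  · have check : ∀ v ∈ signedPowers 2 0, ∀ w ∈ signedPowers 2 6,
        ¬ (12 - 3 * v + 4 * w ∣ 976991 ∧ 20 + 5 * v - 4 * w ∣ 1226209) := by decide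
    rw [show g.eval 4 = 12 - 3 * g.eval 0 + 4 * g.eval 1 by simp only [ev]; ring] at h4
    rw [show g.eval (-4) = 20 + 5 * g.eval 0 - 4 * g.eval 1 by simp only [ev]; ring] at hm4
    exact check _ hv _ hw ⟨h4, hm4⟩
  · have check : ∀ u ∈ signedPowers 2 6, ∀ v ∈ signedPowers 2 0, ∀ w ∈ signedPowers 2 6,
        ¬ (60 + 6 * u - 15 * v + 10 * w ∣ 976991 ∧ -60 + 10 * u - 15 * v + 6 * w ∣ 1226209) := by
      decide
    rw [show g.eval 4 = 60 + 6 * g.eval (-1) - 15 * g.eval 0 + 10 * g.eval 1 by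
      simp only [ev]; ring] at h4
    rw [show g.eval (-4) = -60 + 10 * g.eval (-1) - 15 * g.eval 0 + 6 * g.eval 1 by
      simp only [ev]; ring] at hm4
    exact check _ hu _ hv _ hw ⟨h4, hm4⟩
  · have check : ∀ u ∈ signedPowers 2 6, ∀ v ∈ signedPowers 2 0, ∀ w ∈ signedPowers 2 6,
        ∀ z ∈ signedPowers 4799 1,
        ¬ (120 - 4 * u + 15 * v - 20 * w + 10 * z ∣ 976991 ∧
          360 + 20 * u - 45 * v + 36 * w - 10 * z ∣ 1226209) := by decide
    rw [show g.eval 4 =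
        120 - 4 * g.eval (-1) + 15 * g.eval 0 - 20 * g.eval 1 + 10 * g.eval 2 by
      simp only [ev]; ring] at h4
    rw [show g.eval (-4) =
        360 + 20 * g.eval (-1) - 45 * g.eval 0 + 36 * g.eval 1 - 10 * g.eval 2 by
      simp only [ev]; ring] at hm4
    exact check _ hu _ hv _ hw _ hz ⟨h4, hm4⟩

theorem P_irreducible : Irreducible P := by
  have hP1 : P ≠ 1 := fun h => by simpa [h] using P_natDegree
  refine (P_monic.irreducible_iff_lt_natDegree_lt hP1).2 fun g hg hdeg => ?_
  rw [P_natDegree, Finset.mem_Ioc] at hdeg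
  exact not_dvd_P_of_natDegree_le_four hg hdeg.1 hdeg.2

theorem P_irreducible_and_unit_roots :
    Irreducible (P.map (Int.castRingHom ℚ)) ∧
    P.Monic ∧ P.coeff 0 = 1 ∧
    ∀ x : ℂ, Polynomial.aeval x P = 0 → IsIntegral ℤ x ∧ IsIntegral ℤ x⁻¹ :=
  ⟨(IsPrimitive.Int.irreducible_iff_irreducible_map_cast P_monic.isPrimitive).1 P_irreducible,
    P_monic, P_coeff_zero,
    fun _ hx => ⟨⟨P, P_monic, hx⟩, isIntegral_inv_of_aeval_eq_zero P_coeff_zero hx⟩⟩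
end
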